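/- Let Ω ⊆ ℝ² be a bounded open connected set and Ω' ⊆ Ω a nonempty open connected subset. Let u be a Poisson solution on Ω and let c be a Poisson solution on Ω'. Then c(x) ≤ u(x) for every x in the closure of Ω'. If moreover Ω' ≠ Ω, then c(x) < u(x) for every x ∈ Ω'. -/

import Mathlib

open Metric Set Filter
open scoped Matrix RealInnerProductSpace Topology

noncomputable section

/-- The Euclidean plane ℝ². -/
abbrev E2 := EuclideanSpace ℝ (Fin 2)

/-- The Laplacian `c_xx + c_yy` of a function on the plane. -/
noncomputable def lap (c : E2 → ℝ) (p : E2) : ℝ :=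
  ∑ i : Fin 2, fderiv ℝ (fun q => fderiv ℝ c q (EuclideanSpace.single i 1)) p
    (EuclideanSpace.single i 1)

/-- A Poisson solution on a bounded open set `Ω ⊆ ℝ²` (for fixed constants `K, D`):
continuous on the closure of `Ω`, twice continuously differentiable on `Ω`,
satisfying `Δc = -K/D` on `Ω` and `c = 0` on the boundary `∂Ω`. -/
structure IsPoissonSolution (K D : ℝ) (Ω : Set E2) (c : E2 → ℝ) : Prop where
  contOn : ContinuousOn c (closure Ω)
  smooth : ContDiffOn ℝ 2 c Ω
  eqn : ∀ p ∈ Ω, lap c p = -(K / D)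
  bdry : ∀ p ∈ frontier Ω, c p = 0


/-!
Locally, a harmonic function `w` on the plane is `Re F` with `F` holomorphic, and
`‖exp (-F)‖ = exp (-w)`; so by the maximum modulus principle a local minimum of `w` forces
`w` to be locally constant. This is the strong minimum principle, and on a bounded domain it
puts the minimum of `w` on the frontier. For a Poisson solution `u`, `u + K / (4 D) ‖x - p‖²`
is harmonic, which rules out interior local minima of `u`; hence `u > 0` in `Ω`. Now `u - c`
is harmonic on `Ω'` and `≥ 0` on `∂Ω'`, so `c ≤ u`. If `c = u` at a point of `Ω'`, then
`u - c` vanishes on `Ω'`, hence at a point of `∂Ω' ∩ Ω`, where `u > 0` and `c = 0`.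
-/

open InnerProductSpace Laplacian Module

theorem IsPreconnected.inter_frontier_nonempty {X : Type*} [TopologicalSpace X] {s t : Set X}
    (hs : IsPreconnected s) (hst : (s ∩ t).Nonempty) (hsdt : (s \ t).Nonempty) :
    (s ∩ frontier t).Nonempty := by
  by_contra! h
  have hcover : s ⊆ interior t ∪ (closure t)ᶜ := fun x hx => by
    by_cases hxt : x ∈ closure t
    · exact Or.inl (by_contra fun hxi => h.subset ⟨hx, hxt, hxi⟩)
    · exact Or.inr hxt
  have hdisj : Disjoint (interior t) (closure t)ᶜ :=
    disjoint_compl_right.mono_left interior_subset_closure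
  obtain ⟨x, hxs, hxt⟩ := hst
  have hsi : s ⊆ interior t := hs.subset_left_of_subset_union isOpen_interior
    isClosed_closure.isOpen_compl hdisj hcover
    ⟨x, hxs, (hcover hxs).resolve_right fun hx => hx (subset_closure hxt)⟩
  obtain ⟨y, hys, hyt⟩ := hsdt
  exact hyt (interior_subset (hsi hys))

theorem exists_mem_frontier_le_of_forall_not_isLocalMin {X : Type*} [TopologicalSpace X]
    {U : Set X} (hU : IsOpen U) (hUc : IsCompact (closure U)) {f : X → ℝ}
    (hf : ContinuousOn f (closure U)) (hmin : ∀ x ∈ U, ¬IsLocalMin f x) {x : X}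
    (hx : x ∈ closure U) : ∃ y ∈ frontier U, f y ≤ f x := by
  obtain ⟨m, hm, hmf⟩ := hUc.exists_isMinOn ⟨x, hx⟩ hf
  have hmU : m ∉ U := fun hmU =>
    hmin m hmU (hmf.isLocalMin (mem_of_superset (hU.mem_nhds hmU) subset_closure))
  exact ⟨m, ⟨hm, by rwa [hU.interior_eq]⟩, hmf hx⟩

section Laplacian

variable {E : Type*} [NormedAddCommGroup E] [InnerProductSpace ℝ E] [FiniteDimensional ℝ E]
  {G : Type*} [NormedAddCommGroup G] [InnerProductSpace ℝ G] [FiniteDimensional ℝ G]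
  {F : Type*} [NormedAddCommGroup F] [NormedSpace ℝ F]

theorem laplacian_comp_linearIsometryEquiv (g : G ≃ₗᵢ[ℝ] E) (f : E → F) :
    Δ (f ∘ g) = Δ f ∘ g := by
  let v := stdOrthonormalBasis ℝ E
  ext x
  have hcomp : iteratedFDeriv ℝ 2 (f ∘ g) x =
      (iteratedFDeriv ℝ 2 f (g x)).compContinuousLinearMap fun _ => (g : G →L[ℝ] E) := by
    simpa [iteratedFDerivWithin_univ] using
      g.toContinuousLinearEquiv.iteratedFDerivWithin_comp_right f uniqueDiffOn_univ
        (mem_univ (g x)) 2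
  rw [laplacian_eq_iteratedFDeriv_orthonormalBasis _ (v.map g.symm),
    laplacian_eq_iteratedFDeriv_orthonormalBasis f v]
  refine Finset.sum_congr rfl fun i _ => ?_
  rw [hcomp, ContinuousMultilinearMap.compContinuousLinearMap_apply]
  congr 1
  ext j
  fin_cases j <;> simp

theorem InnerProductSpace.HarmonicAt.comp_linearIsometryEquiv {f : E → F} {x : G}
    (g : G ≃ₗᵢ[ℝ] E) (hf : HarmonicAt f (g x)) : HarmonicAt (f ∘ g) x := by
  refine ⟨hf.1.comp x g.contDiff.contDiffAt, ?_⟩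
  rw [laplacian_comp_linearIsometryEquiv]
  exact g.continuous.continuousAt.eventually hf.2

omit [FiniteDimensional ℝ E] in
theorem fderiv_norm_sub_sq (y : E) :
    fderiv ℝ (fun x => ‖x - y‖ ^ 2) = fun x => 2 • innerSL ℝ (x - y) := by
  ext1 x
  exact ((hasStrictFDerivAt_norm_sq (x - y)).hasFDerivAt.comp x
    ((hasFDerivAt_id x).sub_const y)).fderiv

theorem laplacian_norm_sub_sq (y : E) :
    Δ (fun x => ‖x - y‖ ^ 2) = fun _ => 2 * (finrank ℝ E : ℝ) := by
  let v := stdOrthonormalBasis ℝ E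
  have h2 : fderiv ℝ (fderiv ℝ (fun x => ‖x - y‖ ^ 2)) = fun _ => 2 • innerSL ℝ := by
    rw [fderiv_norm_sub_sq]
    ext1 x
    simp only [map_sub]
    exact ((((innerSL ℝ : E →L[ℝ] E →L[ℝ] ℝ).hasFDerivAt (x := x)).sub_const
      (innerSL ℝ y)).const_smul (2 : ℕ)).fderiv
  have hv : ∀ x i, iteratedFDeriv ℝ 2 (fun x => ‖x - y‖ ^ 2) x ![v i, v i] = 2 := by
    intro x i
    rw [iteratedFDeriv_two_apply, h2]
    simp [innerSL_apply_apply (𝕜 := ℝ), v.orthonormal.1 i]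
  ext x
  simp [laplacian_eq_iteratedFDeriv_orthonormalBasis _ v, hv, mul_comm]

end Laplacian

theorem Complex.eventually_eq_of_harmonicAt_of_isLocalMin {f : ℂ → ℝ} {z : ℂ}
    (hf : HarmonicAt f z) (hmin : IsLocalMin f z) : ∀ᶠ w in 𝓝 z, f w = f z := by
  obtain ⟨R, hR, hball⟩ := Metric.eventually_nhds_iff_ball.1 hf.eventually
  obtain ⟨F, hFan, hFre⟩ := HarmonicOnNhd.exists_analyticOnNhd_ball_re_eq hball
  have hnorm : ∀ᶠ w in 𝓝 z, ‖exp (-F w)‖ = Real.exp (-f w) := by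
    filter_upwards [ball_mem_nhds z hR] with w hw
    rw [norm_exp, neg_re, show (F w).re = f w from hFre hw]
  have hmax : IsLocalMax (norm ∘ fun w => exp (-F w)) z := by
    filter_upwards [hnorm, hmin] with w hw hmw
    simp only [Function.comp_apply, hw, hnorm.self_of_nhds]
    exact Real.exp_le_exp.2 (neg_le_neg hmw)
  have hdiff : ∀ᶠ w in 𝓝 z, DifferentiableAt ℂ (fun w => exp (-F w)) w := by
    filter_upwards [ball_mem_nhds z hR] with w hw
    exact ((hFan w hw).differentiableAt.neg).cexp
  filter_upwards [eventually_eq_of_isLocalMax_norm hdiff hmax, hnorm] with w hw hnw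
  have := congrArg norm hw
  rw [hnw, hnorm.self_of_nhds, Real.exp_eq_exp] at this
  exact neg_inj.1 this

section Plane

variable {E : Type*} [NormedAddCommGroup E] [InnerProductSpace ℝ E] [FiniteDimensional ℝ E]
  [Fact (finrank ℝ E = 2)]

namespace InnerProductSpace

theorem HarmonicAt.eventually_eq_of_isLocalMin {f : E → ℝ} {x : E}
    (hf : HarmonicAt f x) (hmin : IsLocalMin f x) : ∀ᶠ y in 𝓝 x, f y = f x := by
  let g : ℂ ≃ₗᵢ[ℝ] E := Complex.isometryOfOrthonormal
    ((stdOrthonormalBasis ℝ E).reindex (finCongr Fact.out))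
  have hfg : HarmonicAt (f ∘ g) (g.symm x) :=
    HarmonicAt.comp_linearIsometryEquiv g (by rwa [g.apply_symm_apply])
  have hming : IsLocalMin (f ∘ g) (g.symm x) := by
    refine IsLocalMin.comp_continuous ?_ g.continuous.continuousAt
    rwa [g.apply_symm_apply]
  simpa using g.symm.continuous.continuousAt.eventually
    (Complex.eventually_eq_of_harmonicAt_of_isLocalMin hfg hming)

theorem HarmonicOnNhd.eqOn_of_isPreconnected_of_isMinOn {f : E → ℝ} {U : Set E} {c : E}
    (hf : HarmonicOnNhd f U) (hU : IsPreconnected U) (ho : IsOpen U) (hcU : c ∈ U)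
    (hm : IsMinOn f U c) : EqOn f (Function.const E (f c)) U := by
  set V := U ∩ {z | f z = f c}
  suffices U ⊆ V from fun x hx => (this hx).2
  have hVo : IsOpen V := by
    refine isOpen_iff_mem_nhds.2 fun x ⟨hxU, hx⟩ => ?_
    have hmx : IsMinOn f U x := fun y hy => (hx : f x = f c) ▸ hm hy
    filter_upwards [(hf x hxU).eventually_eq_of_isLocalMin (hmx.isLocalMin (ho.mem_nhds hxU)),
      ho.mem_nhds hxU] with y hy hyU
    exact ⟨hyU, hy.trans hx⟩
  have hWo : IsOpen (U ∩ {z | f z ≠ f c}) :=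
    hf.contDiffOn.continuousOn.isOpen_inter_preimage ho isOpen_ne
  refine hU.subset_left_of_subset_union hVo hWo ?_ ?_ ⟨c, hcU, hcU, rfl⟩
  · exact disjoint_left.2 fun x hxV hxW => hxW.2 hxV.2
  · exact fun x hx => (eq_or_ne (f x) (f c)).imp (And.intro hx) (And.intro hx)

theorem HarmonicOnNhd.exists_mem_frontier_le {f : E → ℝ} {U : Set E} (hf : HarmonicOnNhd f U)
    (hU : IsOpen U) (hUb : Bornology.IsBounded U) (hUc : IsPreconnected U)
    (hfc : ContinuousOn f (closure U)) {x : E} (hx : x ∈ closure U) :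
    ∃ y ∈ frontier U, f y ≤ f x := by
  obtain ⟨m, hm, hmf⟩ := hUb.isCompact_closure.exists_isMinOn ⟨x, hx⟩ hfc
  by_cases hmU : m ∈ U
  · have : Nontrivial E := Module.nontrivial_of_finrank_eq_succ (Fact.out : finrank ℝ E = 2)
    obtain ⟨y, hy⟩ := nonempty_frontier_iff.2
      ⟨⟨m, hmU⟩, fun h => NormedSpace.unbounded_univ ℝ E (h ▸ hUb)⟩
    have hconst := (hf.eqOn_of_isPreconnected_of_isMinOn hUc hU hmU (hmf.on_subset subset_closure))
    refine ⟨y, hy, ?_⟩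
    rw [hconst.of_subset_closure hfc continuousOn_const subset_closure subset_rfl
      (frontier_subset_closure hy)]
    exact hmf hx
  · exact ⟨m, ⟨hm, by rwa [hU.interior_eq]⟩, hmf hx⟩

end InnerProductSpace

end Plane

instance : Fact (finrank ℝ E2 = 2) := ⟨finrank_euclideanSpace_fin⟩

theorem lap_eq_laplacian {f : E2 → ℝ} {p : E2} (hf : ContDiffAt ℝ 2 f p) :
    lap f p = Δ f p := by
  have hdiff : DifferentiableAt ℝ (fderiv ℝ f) p :=
    (hf.fderiv_right (m := 1) (by norm_num)).differentiableAt one_ne_zero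
  rw [laplacian_eq_iteratedFDeriv_orthonormalBasis f (EuclideanSpace.basisFun (Fin 2) ℝ), lap]
  refine Finset.sum_congr rfl fun i _ => ?_
  rw [fderiv_clm_apply hdiff (differentiableAt_const _), iteratedFDeriv_two_apply]
  simp

namespace IsPoissonSolution

variable {K D : ℝ} {Ω : Set E2} {u : E2 → ℝ}

theorem contDiffAt (hu : IsPoissonSolution K D Ω u) (hΩ : IsOpen Ω) {p : E2} (hp : p ∈ Ω) :
    ContDiffAt ℝ 2 u p :=
  hu.smooth.contDiffAt (hΩ.mem_nhds hp)

theorem laplacian_eq (hu : IsPoissonSolution K D Ω u) (hΩ : IsOpen Ω) {p : E2} (hp : p ∈ Ω) :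
    Δ u p = -(K / D) := by
  rw [← lap_eq_laplacian (hu.contDiffAt hΩ hp), hu.eqn p hp]

theorem harmonicAt_add_smul_norm_sub_sq (hu : IsPoissonSolution K D Ω u) (hΩ : IsOpen Ω)
    {p : E2} (hp : p ∈ Ω) (y : E2) :
    HarmonicAt (u + (K / (4 * D)) • fun x => ‖x - y‖ ^ 2) p := by
  have hq : ContDiff ℝ 2 fun x : E2 => ‖x - y‖ ^ 2 :=
    (contDiff_norm_sq ℝ).comp (contDiff_id.sub contDiff_const)
  have haq : ContDiff ℝ 2 ((K / (4 * D)) • fun x : E2 => ‖x - y‖ ^ 2) :=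
    hq.const_smul (K / (4 * D))
  refine ⟨(hu.contDiffAt hΩ hp).add haq.contDiffAt, ?_⟩
  filter_upwards [hΩ.mem_nhds hp] with q hq'
  rw [(hu.contDiffAt hΩ hq').laplacian_add haq.contDiffAt,
    laplacian_smul _ hq.contDiffAt, hu.laplacian_eq hΩ hq', laplacian_norm_sub_sq,
    finrank_euclideanSpace_fin]
  simp only [Pi.zero_apply, smul_eq_mul]
  ring

theorem not_isLocalMin (hu : IsPoissonSolution K D Ω u) (hK : 0 < K) (hD : 0 < D)
    (hΩ : IsOpen Ω) {p : E2} (hp : p ∈ Ω) : ¬IsLocalMin u p := by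
  intro hmin
  set a := K / (4 * D)
  have ha : 0 < a := by positivity
  have hh := hu.harmonicAt_add_smul_norm_sub_sq hΩ hp p
  have hhmin : IsLocalMin (u + a • fun x => ‖x - p‖ ^ 2) p := by
    filter_upwards [hmin] with x hx
    simp only [Pi.add_apply, Pi.smul_apply, sub_self, norm_zero, smul_eq_mul]
    nlinarith [sq_nonneg ‖x - p‖]
  have hp' : ∀ᶠ x in 𝓝[≠] p, x = p := by
    filter_upwards [nhdsWithin_le_nhds (hh.eventually_eq_of_isLocalMin hhmin),
      nhdsWithin_le_nhds hmin] with x hx hmx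
    simp only [Pi.add_apply, Pi.smul_apply, sub_self, norm_zero, smul_eq_mul] at hx
    have : ‖x - p‖ ^ 2 = 0 := by nlinarith [sq_nonneg ‖x - p‖]
    simpa [sub_eq_zero] using this
  obtain ⟨x, hx, hxp⟩ := (hp'.and self_mem_nhdsWithin).exists
  exact hxp hx

theorem nonneg (hu : IsPoissonSolution K D Ω u) (hK : 0 < K) (hD : 0 < D) (hΩ : IsOpen Ω)
    (hΩb : Bornology.IsBounded Ω) {x : E2} (hx : x ∈ closure Ω) : 0 ≤ u x := by
  obtain ⟨y, hy, hyx⟩ := exists_mem_frontier_le_of_forall_not_isLocalMin hΩ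
    hΩb.isCompact_closure hu.contOn (fun p hp => hu.not_isLocalMin hK hD hΩ hp) hx
  exact hu.bdry y hy ▸ hyx

theorem pos (hu : IsPoissonSolution K D Ω u) (hK : 0 < K) (hD : 0 < D) (hΩ : IsOpen Ω)
    (hΩb : Bornology.IsBounded Ω) {x : E2} (hx : x ∈ Ω) : 0 < u x := by
  refine (hu.nonneg hK hD hΩ hΩb (subset_closure hx)).lt_of_ne fun hux => ?_
  refine hu.not_isLocalMin hK hD hΩ hx ?_
  filter_upwards [hΩ.mem_nhds hx] with y hy
  exact hux ▸ hu.nonneg hK hD hΩ hΩb (subset_closure hy)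

theorem harmonicOnNhd_sub {Ω' : Set E2} {c : E2 → ℝ} (hu : IsPoissonSolution K D Ω u)
    (hc : IsPoissonSolution K D Ω' c) (hΩ : IsOpen Ω) (hΩ' : IsOpen Ω') (hsub : Ω' ⊆ Ω) :
    HarmonicOnNhd (u - c) Ω' := fun p hp => by
  refine ⟨(hu.contDiffAt hΩ (hsub hp)).sub (hc.contDiffAt hΩ' hp), ?_⟩
  filter_upwards [hΩ'.mem_nhds hp] with q hq
  rw [(hu.contDiffAt hΩ (hsub hq)).laplacian_sub (hc.contDiffAt hΩ' hq),
    hu.laplacian_eq hΩ (hsub hq), hc.laplacian_eq hΩ' hq, sub_self, Pi.zero_apply]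

theorem le_of_subset {Ω' : Set E2} {c : E2 → ℝ} (hu : IsPoissonSolution K D Ω u)
    (hc : IsPoissonSolution K D Ω' c) (hK : 0 < K) (hD : 0 < D) (hΩ : IsOpen Ω)
    (hΩb : Bornology.IsBounded Ω) (hΩ' : IsOpen Ω') (hΩ'c : IsPreconnected Ω') (hsub : Ω' ⊆ Ω) :
    ∀ x ∈ closure Ω', c x ≤ u x := fun x hx => by
  obtain ⟨y, hy, hyx⟩ := (hu.harmonicOnNhd_sub hc hΩ hΩ' hsub).exists_mem_frontier_le hΩ'
    (hΩb.subset hsub) hΩ'c ((hu.contOn.mono (closure_mono hsub)).sub hc.contOn) hx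
  have huy := hu.nonneg hK hD hΩ hΩb (closure_mono hsub (frontier_subset_closure hy))
  simp only [Pi.sub_apply, hc.bdry y hy, sub_zero] at hyx
  linarith

end IsPoissonSolution

theorem poisson_containment_general (K D : ℝ) (hK : 0 < K) (hD : 0 < D)
    (Ω Ω' : Set E2) (hΩ : IsOpen Ω) (hΩb : Bornology.IsBounded Ω)
    (hΩconn : IsConnected Ω) (hΩ' : IsOpen Ω')
    (hΩ'conn : IsConnected Ω') (hsub : Ω' ⊆ Ω)
    (u : E2 → ℝ) (hu : IsPoissonSolution K D Ω u)
    (c : E2 → ℝ) (hc : IsPoissonSolution K D Ω' c) :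
    (∀ x ∈ closure Ω', c x ≤ u x) ∧ (Ω' ≠ Ω → ∀ x ∈ Ω', c x < u x) := by
  have hle := hu.le_of_subset hc hK hD hΩ hΩb hΩ' hΩ'conn.isPreconnected hsub
  refine ⟨hle, fun hne x hx => (hle x (subset_closure hx)).lt_of_ne fun hcx => ?_⟩
  have hmin : IsMinOn (u - c) Ω' x := fun y hy => by
    simpa [hcx] using hle y (subset_closure hy)
  have hconst := ((hu.harmonicOnNhd_sub hc hΩ hΩ' hsub).eqOn_of_isPreconnected_of_isMinOn
    hΩ'conn.isPreconnected hΩ' hx hmin).of_subset_closure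
    ((hu.contOn.mono (closure_mono hsub)).sub hc.contOn) continuousOn_const subset_closure
    subset_rfl
  obtain ⟨q, hqΩ, hq⟩ := hΩconn.isPreconnected.inter_frontier_nonempty ⟨x, hsub hx, hx⟩
    (sdiff_nonempty.2 fun h => hne (hsub.antisymm h))
  have huq := hu.pos hK hD hΩ hΩb hqΩ
  have hwq := hconst (frontier_subset_closure hq)
  simp only [Pi.sub_apply, hc.bdry q hq, hcx, sub_self, sub_zero, Function.const_apply] at hwq
  linarith

/-- Containment Lemma: If `u` is a Poisson solution on a bounded open
connected `Ω` and `c` is a Poisson solution on a nonempty open connected subset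
`Ω' ⊆ Ω`, then `c ≤ u` on the closure of `Ω'`; if moreover `Ω' ≠ Ω`, then `c < u`
everywhere on `Ω'`. -/
theorem poisson_containment (K D : ℝ) (hK : 0 < K) (hD : 0 < D)
    (Ω Ω' : Set E2) (hΩ : IsOpen Ω) (hΩb : Bornology.IsBounded Ω)
    (hΩconn : IsConnected Ω) (hΩ' : IsOpen Ω') (hΩ'ne : Ω'.Nonempty)
    (hΩ'conn : IsConnected Ω') (hsub : Ω' ⊆ Ω)
    (u : E2 → ℝ) (hu : IsPoissonSolution K D Ω u)
    (c : E2 → ℝ) (hc : IsPoissonSolution K D Ω' c) :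
    (∀ x ∈ closure Ω', c x ≤ u x) ∧ (Ω' ≠ Ω → ∀ x ∈ Ω', c x < u x) :=
  poisson_containment_general K D hK hD Ω Ω' hΩ hΩb hΩconn hΩ' hΩ'conn hsub u hu c hc
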